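/- Let G = (V,E,ω) be a connected weighted graph, x, y ∈ M(V), and λ > 0. The minimum value of the sink-transport problem min_{π ∈ Π_*(x,y)} Σ_{v,w ∈ V_*} d_λ(v,w) π(v,w) on the extended graph G_* equals the minimum of the Beckmann-type unbalanced problem min { ‖J‖_{1,ω} + λ‖z‖_1 : J ∈ ℝ^{|E|}, z ∈ ℝ^{|V|}, P^T J = y − x + z }, where ‖J‖_{1,ω} = Σ_{e∈E} ω(e)|J_e|. -/

import Mathlib

open Finset

/-- `WalkCost step a b r` holds if there is a walk from `a` to `b` whose steps
are allowed by `step` and whose total cost is `r`. -/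
inductive WalkCost {α : Type*} (step : α → α → ℝ → Prop) : α → α → ℝ → Prop
  | refl (a : α) : WalkCost step a a 0
  | tail {a b c : α} {r s : ℝ} :
      step a b r → WalkCost step b c s → WalkCost step a c (r + s)

variable {V E : Type*} [Fintype V] [Fintype E] [DecidableEq V]

/-- Divergence `Pᵀ J` of an edge flow for an incidence structure `src, tgt`. -/
def div' (src tgt : E → V) (J : E → ℝ) (v : V) : ℝ :=
  (∑ e, if tgt e = v then J e else 0) - ∑ e, if src e = v then J e else 0

/-- The graph determined by the incidence structure is connected. -/
def IncConnected (src tgt : E → V) : Prop :=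
  ∀ v w : V, Relation.ReflTransGen
    (fun a b => ∃ e, (src e = a ∧ tgt e = b) ∨ (src e = b ∧ tgt e = a)) v w

/-- Allowed steps in the extended graph `G_*` (sink `v_s = none`): traverse an
edge of `G` in either direction at its weight, or move between any vertex of
`V` and the sink at cost `λ`. -/
def stepStar (src tgt : E → V) (ω : E → ℝ) (lam : ℝ) :
    Option V → Option V → ℝ → Prop := fun a b r =>
  (∃ (e : E) (u v : V), a = some u ∧ b = some v ∧ r = ω e ∧
    ((src e = u ∧ tgt e = v) ∨ (src e = v ∧ tgt e = u))) ∨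
  ((∃ v : V, a = some v) ∧ b = none ∧ r = lam) ∨
  (a = none ∧ (∃ v : V, b = some v) ∧ r = lam)

/-- The shortest-path distance `d_λ` in the extended weighted graph `G_*`. -/
noncomputable def dlam (src tgt : E → V) (ω : E → ℝ) (lam : ℝ)
    (a b : Option V) : ℝ :=
  sInf {r : ℝ | WalkCost (stepStar src tgt ω lam) a b r}

/-!
Both sides are the Kantorovich and Beckmann formulations of 1-Wasserstein transport on `G_*`,
where the sink lets mass appear or disappear at price `λ`.

A plan yields a flow of almost the same cost by sending each coupled pair along a walk of
almost minimal length. Conversely, a flow yields a plan by induction on its support: deleting an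
edge that carries `k` from `s` to `t` leaves a flow between the marginals shifted by `k δ_t`
and `k δ_s`, and a plan for those is turned back into one for the original marginals by routing
through the edge, at extra cost at most `k d(s, t)` by the triangle inequality.
-/

section Divergence

variable {α F : Type*} [Fintype F] [DecidableEq α] (src tgt : F → α)

lemma div'_zero : div' src tgt (0 : F → ℝ) = 0 := by
  funext v
  simp [div']

lemma div'_add (J K : F → ℝ) : div' src tgt (J + K) = div' src tgt J + div' src tgt K := by
  funext v
  simp only [div', Pi.add_apply, ite_add_zero, Finset.sum_add_distrib]
  ring

lemma div'_smul (c : ℝ) (J : F → ℝ) : div' src tgt (c • J) = c • div' src tgt J := by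
  funext v
  simp only [div', Pi.smul_apply, smul_eq_mul, mul_sub, Finset.mul_sum, mul_ite, mul_zero]

lemma div'_sum {ι : Type*} (s : Finset ι) (J : ι → F → ℝ) :
    div' src tgt (∑ i ∈ s, J i) = ∑ i ∈ s, div' src tgt (J i) :=
  map_sum (AddMonoidHom.mk' (div' src tgt) (div'_add src tgt)) J s

lemma div'_single [DecidableEq F] (f : F) (c : ℝ) :
    div' src tgt (Pi.single f c) = Pi.single (tgt f) c - Pi.single (src f) c := by
  funext v
  simp only [div', Pi.sub_apply, Pi.single_apply]
  rw [Finset.sum_eq_single f, Finset.sum_eq_single f] <;> simp +contextual [eq_comm]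

end Divergence

section FlowCost

variable {F : Type*} [Fintype F] (ω : F → ℝ)

def flowCost (K : F → ℝ) : ℝ := ∑ f, ω f * |K f|

variable {ω}

lemma flowCost_add_le (hω : ∀ f, 0 ≤ ω f) (K L : F → ℝ) :
    flowCost ω (K + L) ≤ flowCost ω K + flowCost ω L := by
  rw [flowCost, flowCost, flowCost, ← Finset.sum_add_distrib]
  gcongr with f
  rw [← mul_add]
  exact mul_le_mul_of_nonneg_left (abs_add_le _ _) (hω f)

lemma flowCost_sum_le (hω : ∀ f, 0 ≤ ω f) {ι : Type*} (s : Finset ι) (K : ι → F → ℝ) :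
    flowCost ω (∑ i ∈ s, K i) ≤ ∑ i ∈ s, flowCost ω (K i) :=
  Finset.le_sum_of_subadditive _ (by simp [flowCost]) (flowCost_add_le hω) s K

lemma flowCost_smul (c : ℝ) (K : F → ℝ) : flowCost ω (c • K) = |c| * flowCost ω K := by
  simp only [flowCost, Pi.smul_apply, smul_eq_mul, abs_mul, Finset.mul_sum]
  exact Finset.sum_congr rfl fun f _ => by ring

lemma flowCost_single [DecidableEq F] (f : F) (c : ℝ) :
    flowCost ω (Pi.single f c) = ω f * |c| := by
  rw [flowCost, Finset.sum_eq_single f (fun e _ he => by simp [he]) (by simp)]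
  simp

lemma flowCost_eq_update_add [DecidableEq F] (K : F → ℝ) (f : F) :
    flowCost ω K = flowCost ω (Function.update K f 0) + ω f * |K f| := by
  rw [← flowCost_single, flowCost, flowCost, flowCost, ← Finset.sum_add_distrib]
  refine Finset.sum_congr rfl fun e _ => ?_
  rcases eq_or_ne e f with rfl | he <;> simp [*]

end FlowCost

namespace WalkCost

variable {α : Type*} {step : α → α → ℝ → Prop} {a b c : α} {r s : ℝ}

lemma trans (h₁ : WalkCost step a b r) (h₂ : WalkCost step b c s) :
    WalkCost step a c (r + s) := by
  induction h₁ with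
  | refl => simpa using h₂
  | tail hstep _ ih => simpa [add_assoc] using tail hstep (ih h₂)

lemma nonneg (hstep : ∀ a b r, step a b r → 0 ≤ r) (h : WalkCost step a b r) : 0 ≤ r := by
  induction h with
  | refl => exact le_rfl
  | tail hs _ ih => exact add_nonneg (hstep _ _ _ hs) ih

end WalkCost

section WalkDist

variable {α F : Type*} (src tgt : F → α) (ω : F → ℝ)

def edgeStep (a b : α) (r : ℝ) : Prop :=
  ∃ f, r = ω f ∧ ((src f = a ∧ tgt f = b) ∨ (src f = b ∧ tgt f = a))

noncomputable def walkDist (a b : α) : ℝ :=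
  sInf {r : ℝ | WalkCost (edgeStep src tgt ω) a b r}

variable {src tgt ω}

lemma walkCost_edgeStep_nonneg (hω : ∀ f, 0 ≤ ω f) {a b : α} {r : ℝ}
    (h : WalkCost (edgeStep src tgt ω) a b r) : 0 ≤ r :=
  h.nonneg fun _ _ _ ⟨f, hr, _⟩ => hr ▸ hω f

lemma walkDist_le (hω : ∀ f, 0 ≤ ω f) {a b : α} {r : ℝ}
    (h : WalkCost (edgeStep src tgt ω) a b r) : walkDist src tgt ω a b ≤ r :=
  csInf_le ⟨0, fun _ => walkCost_edgeStep_nonneg hω⟩ h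

lemma walkDist_self (hω : ∀ f, 0 ≤ ω f) (a : α) : walkDist src tgt ω a a = 0 :=
  le_antisymm (walkDist_le hω (.refl a))
    (Real.sInf_nonneg fun _ => walkCost_edgeStep_nonneg hω)

lemma walkDist_src_tgt_le (hω : ∀ f, 0 ≤ ω f) (f : F) :
    walkDist src tgt ω (src f) (tgt f) ≤ ω f := by
  simpa using walkDist_le hω (.tail ⟨f, rfl, .inl ⟨rfl, rfl⟩⟩ (.refl _))

lemma walkDist_tgt_src_le (hω : ∀ f, 0 ≤ ω f) (f : F) :
    walkDist src tgt ω (tgt f) (src f) ≤ ω f := by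
  simpa using walkDist_le hω (.tail ⟨f, rfl, .inr ⟨rfl, rfl⟩⟩ (.refl _))

lemma exists_walkCost_lt_walkDist_add {a b : α} (hab : ∃ r, WalkCost (edgeStep src tgt ω) a b r)
    {ε : ℝ} (hε : 0 < ε) :
    ∃ r, WalkCost (edgeStep src tgt ω) a b r ∧ r < walkDist src tgt ω a b + ε :=
  Real.lt_sInf_add_pos hab hε

lemma walkDist_triangle (hω : ∀ f, 0 ≤ ω f) {a b c : α}
    (hab : ∃ r, WalkCost (edgeStep src tgt ω) a b r)
    (hbc : ∃ r, WalkCost (edgeStep src tgt ω) b c r) :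
    walkDist src tgt ω a c ≤ walkDist src tgt ω a b + walkDist src tgt ω b c := by
  refine le_of_forall_pos_le_add fun ε hε => ?_
  obtain ⟨r, hr, hr_lt⟩ := exists_walkCost_lt_walkDist_add hab (half_pos hε)
  obtain ⟨s, hs, hs_lt⟩ := exists_walkCost_lt_walkDist_add hbc (half_pos hε)
  linarith [walkDist_le hω (hr.trans hs)]

end WalkDist

section TransportPlan

variable {α : Type*} [Fintype α]

structure IsTransportPlan (X Y : α → ℝ) (π : α → α → ℝ) : Prop where
  nonneg : ∀ a b, 0 ≤ π a b
  sum_row : ∀ a, ∑ b, π a b = X a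
  sum_col : ∀ b, ∑ a, π a b = Y b

def planCost (d π : α → α → ℝ) : ℝ := ∑ a, ∑ b, d a b * π a b

variable [DecidableEq α] {d π : α → α → ℝ} {X Y : α → ℝ} {s t : α} {k : ℝ}

lemma isTransportPlan_diag (hX : ∀ a, 0 ≤ X a) :
    IsTransportPlan X X (fun a b => if a = b then X a else 0) where
  nonneg a b := by split_ifs <;> simp [hX]
  sum_row a := by simp
  sum_col b := by simp

lemma planCost_diag (hd : ∀ a, d a a = 0) :
    planCost d (fun a b => if a = b then X a else 0) = 0 := by
  simp [planCost, hd]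

lemma planCost_sub_single {m : ℝ} :
    planCost d (fun a b => π a b - if a = t ∧ b = s then m else 0) = planCost d π - m * d t s := by
  simp only [planCost, mul_sub, Finset.sum_sub_distrib, mul_ite, mul_zero, ite_and]
  simp [mul_comm]

-- Of the `k` units leaving `t` and the `k` units entering `s`, remove a proportional share of
-- each row entry `π t b` and column entry `π a s`, and couple the sources `a` feeding `s` with
-- the targets `b` fed from `t` by the product of these shares.
noncomputable def gluePlan (π : α → α → ℝ) (s t : α) (k P Q : ℝ) (a b : α) : ℝ :=
  π a b - k / P * (if a = t then π t b else 0) - k / Q * (if b = s then π a s else 0)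
    + k / (P * Q) * (π a s * π t b)

namespace IsTransportPlan

lemma sub_single {m : ℝ} (hπ : IsTransportPlan (X + Pi.single t k) (Y + Pi.single s k) π)
    (hmπ : m ≤ π t s) :
    IsTransportPlan (X + Pi.single t (k - m)) (Y + Pi.single s (k - m))
      (fun a b => π a b - if a = t ∧ b = s then m else 0) where
  nonneg a b := by
    split_ifs with h
    · obtain ⟨rfl, rfl⟩ := h; linarith
    · simpa using hπ.nonneg a b
  sum_row a := by
    rcases eq_or_ne a t with rfl | ha
    · simp [Finset.sum_sub_distrib, hπ.sum_row]; ring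
    · simp [ha, hπ.sum_row]
  sum_col b := by
    rcases eq_or_ne b s with rfl | hb
    · simp [Finset.sum_sub_distrib, hπ.sum_col]; ring
    · simp [hb, hπ.sum_col]

lemma glue (hX : ∀ a, 0 ≤ X a) (hY : ∀ a, 0 ≤ Y a) (hk : 0 < k)
    (hπ : IsTransportPlan (X + Pi.single t k) (Y + Pi.single s k) π) (hts : π t s = 0) :
    IsTransportPlan X Y (gluePlan π s t k (X t + k) (Y s + k)) where
  nonneg a b := by
    have hP : k / (X t + k) ≤ 1 := div_le_one_of_le₀ (by linarith [hX t]) (by linarith [hX t])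
    have hQ : k / (Y s + k) ≤ 1 := div_le_one_of_le₀ (by linarith [hY s]) (by linarith [hY s])
    have hPQ : 0 ≤ k / ((X t + k) * (Y s + k)) := by
      have := hX t; have := hY s; positivity
    have := hπ.nonneg a b; have := hπ.nonneg a s; have := hπ.nonneg t b
    unfold gluePlan
    split_ifs with ha hb hb
    · subst ha hb; simp [hts]
    · subst ha; rw [hts]; nlinarith
    · subst hb; rw [hts]; nlinarith
    · nlinarith [mul_nonneg hPQ (mul_nonneg (hπ.nonneg a s) (hπ.nonneg t b))]
  sum_row a := by
    have hP : X t + k ≠ 0 := by linarith [hX t]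
    have hQ : Y s + k ≠ 0 := by linarith [hY s]
    simp only [gluePlan, Finset.sum_add_distrib, Finset.sum_sub_distrib, ← Finset.mul_sum,
      Finset.sum_ite_eq', Finset.mem_univ, if_true, hπ.sum_row]
    rcases eq_or_ne a t with rfl | ha
    · simp [hπ.sum_row]; field_simp; ring
    · simp [ha]; field_simp; ring
  sum_col b := by
    have hP : X t + k ≠ 0 := by linarith [hX t]
    have hQ : Y s + k ≠ 0 := by linarith [hY s]
    simp only [gluePlan, Finset.sum_add_distrib, Finset.sum_sub_distrib, ← Finset.mul_sum,
      Finset.sum_ite_eq', Finset.mem_univ, if_true, hπ.sum_col, ← Finset.sum_mul]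
    rcases eq_or_ne b s with rfl | hb
    · simp [hπ.sum_col]; field_simp; ring
    · simp [hb]; field_simp; ring

lemma planCost_gluePlan_le (htri : ∀ a b c, d a c ≤ d a b + d b c) (hX : ∀ a, 0 ≤ X a)
    (hY : ∀ a, 0 ≤ Y a) (hk : 0 < k)
    (hπ : IsTransportPlan (X + Pi.single t k) (Y + Pi.single s k) π) :
    planCost d (gluePlan π s t k (X t + k) (Y s + k)) ≤ planCost d π + k * d s t := by
  set P := X t + k
  set Q := Y s + k
  have hP : 0 < P := by linarith [hX t]
  have hQ : 0 < Q := by linarith [hY s]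
  have hrow : ∑ b, π t b = P := by simp [hπ.sum_row, P]
  have hcol : ∑ a, π a s = Q := by simp [hπ.sum_col, Q]
  set A := ∑ b, d t b * π t b
  set B := ∑ a, d a s * π a s
  have hcost : planCost d (gluePlan π s t k P Q) = planCost d π - k / P * A - k / Q * B
      + k / (P * Q) * ∑ a, ∑ b, d a b * (π a s * π t b) := by
    simp only [planCost, gluePlan, mul_add, mul_sub, Finset.sum_add_distrib, Finset.sum_sub_distrib,
      Finset.mul_sum, mul_ite, mul_zero, Finset.sum_ite_eq', Finset.sum_ite_irrel,
      Finset.sum_const_zero, Finset.mem_univ, if_true, A, B]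
    simp only [mul_left_comm]
  have hthrough : ∑ a, ∑ b, d a b * (π a s * π t b) ≤ Q * A + P * Q * d s t + P * B := by
    calc ∑ a, ∑ b, d a b * (π a s * π t b)
        ≤ ∑ a, ∑ b, (d a s + d s t + d t b) * (π a s * π t b) := by
          gcongr with a _ b _
          · exact mul_nonneg (hπ.nonneg a s) (hπ.nonneg t b)
          · exact (htri a s b).trans (by linarith [htri s t b])
      _ = B * ∑ b, π t b + d s t * ((∑ a, π a s) * ∑ b, π t b) + (∑ a, π a s) * A := by
          simp only [A, B]
          rw [Finset.sum_mul_sum, Finset.sum_mul_sum, Finset.sum_mul_sum, Finset.mul_sum]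
          simp only [Finset.mul_sum, ← Finset.sum_add_distrib]
          exact Finset.sum_congr rfl fun a _ => Finset.sum_congr rfl fun b _ => by ring
      _ = Q * A + P * Q * d s t + P * B := by rw [hrow, hcol]; ring
  rw [hcost]
  have := mul_le_mul_of_nonneg_left hthrough (le_of_lt (by positivity : 0 < k / (P * Q)))
  have e : k / (P * Q) * (Q * A + P * Q * d s t + P * B) = k / P * A + k / Q * B + k * d s t := by
    field_simp; ring
  linarith

lemma exists_of_shift (hdiag : ∀ a, d a a = 0) (htri : ∀ a b c, d a c ≤ d a b + d b c)
    (hX : ∀ a, 0 ≤ X a) (hY : ∀ a, 0 ≤ Y a) (hk : 0 ≤ k)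
    (hπ : IsTransportPlan (X + Pi.single t k) (Y + Pi.single s k) π) :
    ∃ σ, IsTransportPlan X Y σ ∧ planCost d σ ≤ planCost d π + k * d s t := by
  have hround : 0 ≤ d t s + d s t := by linarith [htri t s t, hdiag t]
  rcases le_or_gt k (π t s) with hle | hlt
  · refine ⟨_, by simpa using hπ.sub_single hle, ?_⟩
    rw [planCost_sub_single]
    nlinarith
  · -- cancel the mass already sent from `t` to `s`, then glue the rest through `s → t`
    have hπ₁ := hπ.sub_single le_rfl
    have hk₁ : 0 < k - π t s := sub_pos.2 hlt
    refine ⟨_, hπ₁.glue hX hY hk₁ (by simp), ?_⟩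
    have := hπ₁.planCost_gluePlan_le htri hX hY hk₁ (d := d)
    rw [planCost_sub_single] at this
    nlinarith [hπ.nonneg t s]

end IsTransportPlan

end TransportPlan

section FlowToPlan

variable {α F : Type*} [DecidableEq α] [Fintype F] [DecidableEq F]
  {src tgt : F → α} {ω : F → ℝ} {d : α → α → ℝ}

lemma exists_shift_of_update_zero {X Y : α → ℝ} {K : F → ℝ}
    (hedge : ∀ f, d (src f) (tgt f) ≤ ω f) (hedge' : ∀ f, d (tgt f) (src f) ≤ ω f)
    (hK : div' src tgt K = Y - X) (f : F) :
    ∃ s t k, 0 ≤ k ∧ k * d s t ≤ ω f * |K f| ∧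
      div' src tgt (Function.update K f 0) = (Y + Pi.single s k) - (X + Pi.single t k) := by
  have hsplit : K = Function.update K f 0 + Pi.single f (K f) := by
    funext e; rcases eq_or_ne e f with rfl | he <;> simp [*]
  have hdiv : div' src tgt (Function.update K f 0)
      = Y - X - (Pi.single (tgt f) (K f) - Pi.single (src f) (K f)) := by
    rw [← hK, ← div'_single, hsplit, div'_add, ← hsplit]
    abel
  rcases le_total 0 (K f) with h | h
  · refine ⟨src f, tgt f, K f, h, ?_, ?_⟩
    · rw [abs_of_nonneg h, mul_comm]
      exact mul_le_mul_of_nonneg_right (hedge f) h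
    · rw [hdiv]; abel
  · refine ⟨tgt f, src f, -K f, neg_nonneg.2 h, ?_, ?_⟩
    · rw [abs_of_nonpos h, mul_comm]
      exact mul_le_mul_of_nonneg_right (hedge' f) (neg_nonneg.2 h)
    · rw [hdiv, Pi.single_neg, Pi.single_neg]; abel

variable [Fintype α]

theorem exists_isTransportPlan_planCost_le_flowCost (hdiag : ∀ a, d a a = 0)
    (htri : ∀ a b c, d a c ≤ d a b + d b c)
    (hedge : ∀ f, d (src f) (tgt f) ≤ ω f) (hedge' : ∀ f, d (tgt f) (src f) ≤ ω f)
    {X Y : α → ℝ} (hX : ∀ a, 0 ≤ X a) (hY : ∀ a, 0 ≤ Y a) (K : F → ℝ)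
    (hK : div' src tgt K = Y - X) :
    ∃ π, IsTransportPlan X Y π ∧ planCost d π ≤ flowCost ω K := by
  suffices ∀ (S : Finset F) (K : F → ℝ) (X Y : α → ℝ), (∀ f ∉ S, K f = 0) →
      (∀ a, 0 ≤ X a) → (∀ a, 0 ≤ Y a) → div' src tgt K = Y - X →
      ∃ π, IsTransportPlan X Y π ∧ planCost d π ≤ flowCost ω K from
    this Finset.univ K X Y (by simp) hX hY hK
  intro S
  induction S using Finset.induction_on with
  | empty =>
    intro K X Y hKS hX _ hK
    obtain rfl : K = 0 := funext fun f => hKS f (Finset.notMem_empty f)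
    obtain rfl : Y = X := by rw [div'_zero] at hK; exact (sub_eq_zero.1 hK.symm)
    refine ⟨_, isTransportPlan_diag hX, ?_⟩
    simp [planCost_diag hdiag, flowCost]
  | insert f S _ ih =>
    intro K X Y hKS hX hY hK
    obtain ⟨s, t, k, hk, hcost, hdiv⟩ := exists_shift_of_update_zero hedge hedge' hK f
    have hKS' : ∀ e ∉ S, Function.update K f 0 e = 0 := fun e he => by
      rcases eq_or_ne e f with rfl | hef
      · simp
      · simpa [hef] using hKS e (by simp [hef, he])
    have hsingle (i a : α) : 0 ≤ Pi.single (M := fun _ => ℝ) i k a := by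
      rw [Pi.single_apply]; split_ifs <;> simp [hk]
    obtain ⟨π, hπ, hπcost⟩ := ih _ _ _ hKS' (fun a => add_nonneg (hX a) (hsingle t a))
      (fun a => add_nonneg (hY a) (hsingle s a)) hdiv
    obtain ⟨σ, hσ, hσcost⟩ := hπ.exists_of_shift hdiag htri hX hY hk
    exact ⟨σ, hσ, by rw [flowCost_eq_update_add K f]; linarith⟩

end FlowToPlan

section PlanToFlow

variable {α F : Type*} [DecidableEq α] [Fintype F] [DecidableEq F]
  {src tgt : F → α} {ω : F → ℝ}

lemma exists_flow_of_walkCost (hω : ∀ f, 0 ≤ ω f) {a b : α} {r : ℝ}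
    (h : WalkCost (edgeStep src tgt ω) a b r) :
    ∃ K, div' src tgt K = Pi.single b 1 - Pi.single a 1 ∧ flowCost ω K ≤ r := by
  induction h with
  | refl a => exact ⟨0, by simp [div'_zero], by simp [flowCost]⟩
  | @tail a b c _ s hstep _ ih =>
    obtain ⟨K, hK, hKcost⟩ := ih
    obtain ⟨f, rfl, hf⟩ := hstep
    obtain ⟨σ, hσ, hdivσ⟩ : ∃ σ : ℝ, |σ| = 1 ∧
        div' src tgt (Pi.single f σ) = Pi.single b 1 - Pi.single a 1 := by
      rcases hf with ⟨rfl, rfl⟩ | ⟨rfl, rfl⟩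
      · exact ⟨1, abs_one, div'_single ..⟩
      · refine ⟨-1, by simp, ?_⟩
        rw [div'_single, Pi.single_neg, Pi.single_neg]; abel
    refine ⟨K + Pi.single f σ, by rw [div'_add, hK, hdivσ]; abel, ?_⟩
    have := flowCost_add_le hω K (Pi.single f σ)
    rw [flowCost_single, hσ] at this
    linarith

variable [Fintype α]

theorem exists_flow_flowCost_le_planCost_add (hω : ∀ f, 0 ≤ ω f)
    (hconn : ∀ a b, ∃ r, WalkCost (edgeStep src tgt ω) a b r)
    {π : α → α → ℝ} (hπ : ∀ a b, 0 ≤ π a b) {ε : ℝ} (hε : 0 < ε) :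
    ∃ K, div' src tgt K = (fun b => ∑ a, π a b) - (fun a => ∑ b, π a b) ∧
      flowCost ω K ≤ planCost (walkDist src tgt ω) π + ε := by
  set T := ∑ a, ∑ b, π a b
  have hT : 0 ≤ T := Finset.sum_nonneg fun a _ => Finset.sum_nonneg fun b _ => hπ a b
  have hδ : 0 < ε / (T + 1) := by positivity
  have hflow (a b : α) : ∃ K, div' src tgt K = Pi.single b 1 - Pi.single a 1 ∧
      flowCost ω K ≤ walkDist src tgt ω a b + ε / (T + 1) := by
    obtain ⟨r, hr, hr_lt⟩ := exists_walkCost_lt_walkDist_add (hconn a b) hδ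
    obtain ⟨K, hK, hKcost⟩ := exists_flow_of_walkCost hω hr
    exact ⟨K, hK, by linarith⟩
  choose K hK hKcost using hflow
  refine ⟨∑ a, ∑ b, π a b • K a b, ?_, ?_⟩
  · simp only [div'_sum, div'_smul, hK]
    funext v
    simp [Finset.sum_apply, Pi.single_apply, mul_sub, Finset.sum_sub_distrib]
  · calc flowCost ω (∑ a, ∑ b, π a b • K a b)
        ≤ ∑ a, ∑ b, π a b * flowCost ω (K a b) := by
          refine (flowCost_sum_le hω _ _).trans (Finset.sum_le_sum fun a _ => ?_)
          refine (flowCost_sum_le hω _ _).trans_eq (Finset.sum_congr rfl fun b _ => ?_)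
          rw [flowCost_smul, abs_of_nonneg (hπ a b)]
      _ ≤ ∑ a, ∑ b, π a b * (walkDist src tgt ω a b + ε / (T + 1)) := by
          gcongr with a _ b _
          · exact hπ a b
          · exact hKcost a b
      _ = planCost (walkDist src tgt ω) π + ε / (T + 1) * T := by
          simp only [planCost, mul_add, Finset.sum_add_distrib, T, Finset.mul_sum]
          congr 1 <;> exact Finset.sum_congr rfl fun a _ => Finset.sum_congr rfl fun b _ => by ring
      _ ≤ planCost (walkDist src tgt ω) π + ε := by
          gcongr
          rw [div_mul_eq_mul_div, div_le_iff₀ (by positivity)]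
          nlinarith

end PlanToFlow

section SinkExtension

variable {α F : Type*}

def sinkSrc (src : F → α) : F ⊕ α → Option α := Sum.elim (some ∘ src) some

def sinkTgt (tgt : F → α) : F ⊕ α → Option α := Sum.elim (some ∘ tgt) fun _ => none

def sinkWeight (ω : F → ℝ) (lam : ℝ) : F ⊕ α → ℝ := Sum.elim ω fun _ => lam

variable {src tgt : F → α} {ω : F → ℝ} {lam : ℝ}

lemma stepStar_iff_edgeStep {a b : Option α} {r : ℝ} :
    stepStar src tgt ω lam a b r ↔
      edgeStep (sinkSrc src) (sinkTgt tgt) (sinkWeight ω lam) a b r := by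
  constructor
  · rintro (⟨e, u, v, rfl, rfl, rfl, hor⟩ | ⟨⟨v, rfl⟩, rfl, rfl⟩ | ⟨rfl, ⟨v, rfl⟩, rfl⟩)
    · exact ⟨.inl e, rfl, by simpa [sinkSrc, sinkTgt] using hor⟩
    · exact ⟨.inr v, rfl, .inl ⟨rfl, rfl⟩⟩
    · exact ⟨.inr v, rfl, .inr ⟨rfl, rfl⟩⟩
  · rintro ⟨e | v, rfl, ⟨rfl, rfl⟩ | ⟨rfl, rfl⟩⟩
    · exact .inl ⟨e, _, _, rfl, rfl, rfl, .inl ⟨rfl, rfl⟩⟩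
    · exact .inl ⟨e, _, _, rfl, rfl, rfl, .inr ⟨rfl, rfl⟩⟩
    · exact .inr (.inl ⟨⟨v, rfl⟩, rfl, rfl⟩)
    · exact .inr (.inr ⟨rfl, ⟨v, rfl⟩, rfl⟩)

lemma sinkWeight_nonneg (hω : ∀ e, 0 ≤ ω e) (hlam : 0 ≤ lam) (f : F ⊕ α) :
    0 ≤ sinkWeight ω lam f := by
  cases f <;> simp [sinkWeight, hω, hlam]

lemma dlam_eq_walkDist [Fintype α] [DecidableEq α] [Fintype F] :
    dlam src tgt ω lam = walkDist (sinkSrc src) (sinkTgt tgt) (sinkWeight ω lam) := by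
  have hstep : stepStar src tgt ω lam = edgeStep (sinkSrc src) (sinkTgt tgt) (sinkWeight ω lam) :=
    funext fun _ => funext fun _ => funext fun _ => propext stepStar_iff_edgeStep
  funext a b
  rw [dlam, walkDist, hstep]

lemma dlam_nonneg [Fintype α] [DecidableEq α] [Fintype F] (hω : ∀ e, 0 ≤ ω e) (hlam : 0 ≤ lam)
    (a b : Option α) : 0 ≤ dlam src tgt ω lam a b := by
  rw [dlam_eq_walkDist]
  exact Real.sInf_nonneg fun _ => walkCost_edgeStep_nonneg (sinkWeight_nonneg hω hlam)

lemma exists_walkCost_sink (a b : Option α) :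
    ∃ r, WalkCost (edgeStep (sinkSrc src) (sinkTgt tgt) (sinkWeight ω lam)) a b r := by
  have toSink (a : Option α) : ∃ r, WalkCost (edgeStep (sinkSrc src) (sinkTgt tgt)
      (sinkWeight ω lam)) a none r := by
    cases a with
    | none => exact ⟨0, .refl _⟩
    | some v => exact ⟨_, .tail ⟨.inr v, rfl, .inl ⟨rfl, rfl⟩⟩ (.refl _)⟩
  have fromSink (b : Option α) : ∃ r, WalkCost (edgeStep (sinkSrc src) (sinkTgt tgt)
      (sinkWeight ω lam)) none b r := by
    cases b with
    | none => exact ⟨0, .refl _⟩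
    | some v => exact ⟨_, .tail ⟨.inr v, rfl, .inr ⟨rfl, rfl⟩⟩ (.refl _)⟩
  obtain ⟨r, hr⟩ := toSink a
  obtain ⟨s, hs⟩ := fromSink b
  exact ⟨r + s, hr.trans hs⟩

variable [Fintype α] [Fintype F]

lemma flowCost_sinkWeight (K : F ⊕ α → ℝ) :
    flowCost (sinkWeight ω lam) K = flowCost ω (K ∘ Sum.inl) + lam * ∑ v, |K (.inr v)| := by
  simp [flowCost, sinkWeight, Fintype.sum_sum_type, Finset.mul_sum]

lemma div'_sink_some [DecidableEq α] (K : F ⊕ α → ℝ) (v : α) :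
    div' (sinkSrc src) (sinkTgt tgt) K (some v) = div' src tgt (K ∘ Sum.inl) v - K (.inr v) := by
  simp [div', sinkSrc, sinkTgt, Fintype.sum_sum_type]
  ring

end SinkExtension

section SinkTransport

variable {α F : Type*} [Fintype α] [DecidableEq α] [Fintype F] [DecidableEq F]
  {src tgt : F → α} {ω : F → ℝ} {lam : ℝ}

lemma exists_sinkPlan_le_beckmann (hω : ∀ e, 0 ≤ ω e) (hlam : 0 ≤ lam)
    {x y : α → ℝ} (hx : ∀ v, 0 ≤ x v) (hy : ∀ v, 0 ≤ y v) {J : F → ℝ} {z : α → ℝ}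
    (hJ : ∀ v, div' src tgt J v = y v - x v + z v) :
    ∃ π : Option α → Option α → ℝ, (∀ a b, 0 ≤ π a b) ∧ (∀ v, ∑ b, π (some v) b = x v) ∧
      (∀ w, ∑ a, π a (some w) = y w) ∧
      ∑ a, ∑ b, dlam src tgt ω lam a b * π a b ≤ (∑ e, ω e * |J e|) + lam * ∑ v, |z v| := by
  set K : F ⊕ α → ℝ := Sum.elim J z
  -- the sink absorbs or emits whatever mass the flow leaves unbalanced there
  set D := div' (sinkSrc src) (sinkTgt tgt) K none
  have hK : div' (sinkSrc src) (sinkTgt tgt) K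
      = (fun a => a.elim (max D 0) y) - (fun a => a.elim (max (-D) 0) x) := by
    funext a
    cases a with
    | none => exact (max_zero_sub_eq_self D).symm
    | some v => simp [div'_sink_some, K, hJ]
  obtain ⟨π, hπ, hcost⟩ := exists_isTransportPlan_planCost_le_flowCost (ω := sinkWeight ω lam)
    (walkDist_self (sinkWeight_nonneg hω hlam))
    (fun _ _ _ => walkDist_triangle (sinkWeight_nonneg hω hlam) (exists_walkCost_sink _ _)
      (exists_walkCost_sink _ _))
    (walkDist_src_tgt_le (sinkWeight_nonneg hω hlam))
    (walkDist_tgt_src_le (sinkWeight_nonneg hω hlam))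
    (by rintro (_ | v) <;> simp [hx]) (by rintro (_ | v) <;> simp [hy]) K hK
  refine ⟨π, hπ.nonneg, fun v => hπ.sum_row (some v), fun w => hπ.sum_col (some w), ?_⟩
  rw [dlam_eq_walkDist]
  rwa [flowCost_sinkWeight] at hcost

lemma exists_beckmann_le_sinkPlan_add (hω : ∀ e, 0 ≤ ω e) (hlam : 0 ≤ lam)
    {x y : α → ℝ} {π : Option α → Option α → ℝ} (hπ : ∀ a b, 0 ≤ π a b)
    (hrow : ∀ v, ∑ b, π (some v) b = x v) (hcol : ∀ w, ∑ a, π a (some w) = y w)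
    {ε : ℝ} (hε : 0 < ε) :
    ∃ (J : F → ℝ) (z : α → ℝ), (∀ v, div' src tgt J v = y v - x v + z v) ∧
      (∑ e, ω e * |J e|) + lam * ∑ v, |z v| ≤ ∑ a, ∑ b, dlam src tgt ω lam a b * π a b + ε := by
  obtain ⟨K, hK, hcost⟩ := exists_flow_flowCost_le_planCost_add (sinkWeight_nonneg hω hlam)
    exists_walkCost_sink hπ hε
  refine ⟨K ∘ Sum.inl, K ∘ Sum.inr, fun v => ?_, ?_⟩
  · have := congrFun hK (some v)
    rw [div'_sink_some] at this
    simp only [Pi.sub_apply, hrow, hcol] at this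
    simp only [Function.comp_apply]
    linarith
  · rw [dlam_eq_walkDist]
    rwa [flowCost_sinkWeight] at hcost

end SinkTransport

lemma csInf_le_csInf_of_forall_exists_le_add {S T : Set ℝ} (hS : BddBelow S) (hT : T.Nonempty)
    (h : ∀ t ∈ T, ∀ ε > 0, ∃ s ∈ S, s ≤ t + ε) : sInf S ≤ sInf T :=
  le_csInf hT fun t ht => le_of_forall_pos_le_add fun ε hε =>
    let ⟨_, hs, hst⟩ := h t ht ε hε
    (csInf_le hS hs).trans hst

theorem sink_transport_eq_unbalanced_beckmann_general (src tgt : E → V) (ω : E → ℝ)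
    (hω : ∀ e, 0 < ω e) (lam : ℝ)
    (hlam : 0 < lam) (x y : V → ℝ) (hx : ∀ v, 0 ≤ x v) (hy : ∀ v, 0 ≤ y v) :
    sInf {c : ℝ | ∃ π : Option V → Option V → ℝ,
        (∀ a b, 0 ≤ π a b) ∧
        (∀ v : V, ∑ b, π (some v) b = x v) ∧
        (∀ w : V, ∑ a, π a (some w) = y w) ∧
        c = ∑ a, ∑ b, dlam src tgt ω lam a b * π a b} =
      sInf {c : ℝ | ∃ (J : E → ℝ) (z : V → ℝ),
        (∀ v, div' src tgt J v = y v - x v + z v) ∧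
        c = (∑ e, ω e * |J e|) + lam * ∑ v, |z v|} := by
  classical
  have hω0 : ∀ e, 0 ≤ ω e := fun e => (hω e).le
  have hzero : ∀ v, div' src tgt 0 v = y v - x v + (x v - y v) := by simp [div'_zero]
  obtain ⟨π₀, hπ₀, hrow₀, hcol₀, -⟩ := exists_sinkPlan_le_beckmann hω0 hlam.le hx hy hzero
  apply le_antisymm
  · refine csInf_le_csInf_of_forall_exists_le_add ⟨0, ?_⟩ ⟨_, 0, _, hzero, rfl⟩ ?_
    · rintro _ ⟨π, hπ, -, -, rfl⟩
      exact Finset.sum_nonneg fun a _ => Finset.sum_nonneg fun b _ =>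
        mul_nonneg (dlam_nonneg hω0 hlam.le a b) (hπ a b)
    · rintro _ ⟨J, z, hJ, rfl⟩ ε hε
      obtain ⟨π, hπ, hrow, hcol, hcost⟩ := exists_sinkPlan_le_beckmann hω0 hlam.le hx hy hJ
      exact ⟨_, ⟨π, hπ, hrow, hcol, rfl⟩, by linarith⟩
  · refine csInf_le_csInf_of_forall_exists_le_add ⟨0, ?_⟩ ⟨_, π₀, hπ₀, hrow₀, hcol₀, rfl⟩ ?_
    · rintro _ ⟨J, z, -, rfl⟩
      exact add_nonneg (Finset.sum_nonneg fun e _ => mul_nonneg (hω0 e) (abs_nonneg _))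
        (mul_nonneg hlam.le (Finset.sum_nonneg fun v _ => abs_nonneg _))
    · rintro _ ⟨π, hπ, hrow, hcol, rfl⟩ ε hε
      obtain ⟨J, z, hJ, hcost⟩ := exists_beckmann_le_sinkPlan_add hω0 hlam.le hπ hrow hcol hε
      exact ⟨_, ⟨J, z, hJ, rfl⟩, hcost⟩

/-- Equivalence of the sink-transport (Figalli–Gigli-style) problem on the
extended graph `G_*` and the unbalanced Beckmann problem with `p = 1`. -/
theorem sink_transport_eq_unbalanced_beckmann (src tgt : E → V) (ω : E → ℝ)
    (hω : ∀ e, 0 < ω e) (hconn : IncConnected src tgt) (lam : ℝ)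
    (hlam : 0 < lam) (x y : V → ℝ) (hx : ∀ v, 0 ≤ x v) (hy : ∀ v, 0 ≤ y v) :
    sInf {c : ℝ | ∃ π : Option V → Option V → ℝ,
        (∀ a b, 0 ≤ π a b) ∧
        (∀ v : V, ∑ b, π (some v) b = x v) ∧
        (∀ w : V, ∑ a, π a (some w) = y w) ∧
        c = ∑ a, ∑ b, dlam src tgt ω lam a b * π a b} =
      sInf {c : ℝ | ∃ (J : E → ℝ) (z : V → ℝ),
        (∀ v, div' src tgt J v = y v - x v + z v) ∧
        c = (∑ e, ω e * |J e|) + lam * ∑ v, |z v|} :=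
  sink_transport_eq_unbalanced_beckmann_general src tgt ω hω lam hlam x y hx hy
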